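/- arXiv:1207.2966 — 4 statements merged into one kernel-verified Lean document; each statement's English description precedes it below -/
import Mathlib

section
/- Let q be an odd prime power and let g, h be elements of PGL(2,q) with θ(g) = θ(h) and θ(g) ∉ {0, 4}. Then g and h are conjugate in PGL(2,q). -/
open Matrix

/-- `θ(M) = (tr M)² / det M` for an invertible 2×2 matrix `M`. -/
noncomputable def theta {F : Type*} [Field F] (M : GL (Fin 2) F) : F :=
  (Matrix.trace (M : Matrix (Fin 2) (Fin 2) F)) ^ 2 / (M : Matrix (Fin 2) (Fin 2) F).det

/-- `PGL(2, F)`, the quotient of `GL(2, F)` by its centre (the nonzero scalar matrices). -/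
abbrev PGL2 (F : Type*) [Field F] := GL (Fin 2) F ⧸ Subgroup.center (GL (Fin 2) F)

/-- The conjugacy invariant `θ` on `PGL(2, F)` induced by `M ↦ (tr M)²/det M`
(well defined since `θ` is invariant under scalar multiplication). -/
noncomputable def thetaPGL {F : Type*} [Field F] (g : PGL2 F) : F :=
  theta (Quotient.out g)

/-- `PSL(2, F)` viewed as a subgroup of `PGL(2, F)`: the image of `SL(2, F)`. -/
def PSLsub (F : Type*) [Field F] : Subgroup (PGL2 F) :=
  ((QuotientGroup.mk' (Subgroup.center (GL (Fin 2) F))).comp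
    Matrix.SpecialLinearGroup.toGL).range


/-!
A non-scalar `2 × 2` matrix is conjugate to the companion matrix of its characteristic polynomial,
so two non-scalar elements of `GL(2, F)` with the same trace and determinant are conjugate.
If `θ(M) = θ(N) ≠ 0`, rescaling `N` by `tr M / tr N` makes traces and determinants agree, and
`θ ≠ 4` says that the discriminant `tr² - 4 det` is nonzero, so neither matrix is scalar.
Scalars are central, so the conjugacy descends to `PGL(2, F)`.
-/

namespace Matrix

lemma discr_scalar_fin_two {R : Type*} [CommRing R] (a : R) :
    (scalar (Fin 2) a).discr = 0 := by
  simp [discr_fin_two]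
  ring

lemma notMem_range_scalar_of_discr_ne_zero {R : Type*} [CommRing R]
    {A : Matrix (Fin 2) (Fin 2) R} (h : A.discr ≠ 0) : A ∉ Set.range (scalar (Fin 2)) := by
  rintro ⟨a, rfl⟩
  exact h (discr_scalar_fin_two a)

variable {F : Type*} [Field F]

/-- The change of basis is `(e₁, A e₁)` when `A e₁ ∉ F e₁`, `(e₂, A e₂)` when `A e₂ ∉ F e₂`,
and `(e₁ + e₂, A (e₁ + e₂))` when `A` is diagonal with distinct entries. -/
lemma exists_mul_eq_mul_companion {A : Matrix (Fin 2) (Fin 2) F}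
    (hA : A ∉ Set.range (scalar (Fin 2))) :
    ∃ P : GL (Fin 2) F, A * P = P * !![0, -A.det; 1, A.trace] := by
  by_cases hc : A 1 0 = 0
  · by_cases hb : A 0 1 = 0
    · have had : A 0 0 ≠ A 1 1 := by
        rintro had
        refine hA ⟨A 0 0, ?_⟩
        ext i j
        fin_cases i <;> fin_cases j <;> simp [hb, hc, had]
      refine ⟨GeneralLinearGroup.mkOfDetNeZero !![1, A 0 0; 1, A 1 1]
        (by simpa [det_fin_two, sub_eq_zero] using had.symm), ?_⟩
      ext i j
      fin_cases i <;> fin_cases j <;>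
        simp [mul_apply, det_fin_two, trace_fin_two, hb, hc] <;> ring
    · refine ⟨GeneralLinearGroup.mkOfDetNeZero !![0, A 0 1; 1, A 1 1]
        (by simpa [det_fin_two] using hb), ?_⟩
      ext i j
      fin_cases i <;> fin_cases j <;>
        simp [mul_apply, det_fin_two, trace_fin_two] <;> ring
  · refine ⟨GeneralLinearGroup.mkOfDetNeZero !![1, A 0 0; 0, A 1 0]
      (by simpa [det_fin_two] using hc), ?_⟩
    ext i j
    fin_cases i <;> fin_cases j <;>
      simp [mul_apply, det_fin_two, trace_fin_two] <;> ring

namespace GeneralLinearGroup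

lemma isConj_of_trace_eq_of_det_eq {M N : GL (Fin 2) F}
    (hM : M.val ∉ Set.range (Matrix.scalar (Fin 2)))
    (hN : N.val ∉ Set.range (Matrix.scalar (Fin 2)))
    (htr : M.val.trace = N.val.trace) (hdet : M.val.det = N.val.det) :
    IsConj M N := by
  obtain ⟨P, hP⟩ := exists_mul_eq_mul_companion hM
  obtain ⟨Q, hQ⟩ := exists_mul_eq_mul_companion hN
  have hPQ : P⁻¹ * M * P = Q⁻¹ * N * Q := Units.ext <| by
    simp only [Units.val_mul, mul_assoc, hP, hQ, htr, hdet, Units.inv_mul_cancel_left]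
  have conj_self (X U : GL (Fin 2) F) : IsConj X (U⁻¹ * X * U) :=
    isConj_iff.mpr ⟨U⁻¹, by rw [inv_inv]⟩
  exact (conj_self M P).trans (hPQ ▸ (conj_self N Q).symm)

end GeneralLinearGroup

end Matrix

lemma QuotientGroup.isConj_mk_of_isConj_mul {G : Type*} [Group G] {N : Subgroup G} [N.Normal]
    {a b z : G} (hz : z ∈ N) (h : IsConj a (z * b)) : IsConj (a : G ⧸ N) b := by
  simpa [(QuotientGroup.eq_one_iff z).mpr hz] using (QuotientGroup.mk' N).map_isConj h

section theta

variable {F : Type*} [Field F]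

lemma trace_ne_zero_of_theta_ne_zero {M : GL (Fin 2) F} (h : theta M ≠ 0) :
    M.val.trace ≠ 0 := by
  rintro htr
  simp [theta, htr] at h

lemma discr_ne_zero_of_theta_ne_four {M : GL (Fin 2) F} (h : theta M ≠ 4) :
    M.val.discr ≠ 0 := by
  rw [discr_fin_two, sub_ne_zero]
  rintro hsq
  exact h (by rw [theta, hsq, mul_div_cancel_right₀ _ M.det_ne_zero])

lemma exists_mem_center_trace_eq_det_eq_of_theta_eq {M N : GL (Fin 2) F}
    (hθ : theta M = theta N) (hN : theta N ≠ 0) :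
    ∃ z ∈ Subgroup.center (GL (Fin 2) F),
      (z * N).val.trace = M.val.trace ∧ (z * N).val.det = M.val.det := by
  have htrN := trace_ne_zero_of_theta_ne_zero hN
  have htrM := trace_ne_zero_of_theta_ne_zero (hθ ▸ hN)
  set c := M.val.trace / N.val.trace
  set z := GeneralLinearGroup.scalar (Fin 2) (Units.mk0 c (div_ne_zero htrM htrN))
  have hz : (z * N).val = c • N := by
    simp [z, GeneralLinearGroup.coe_scalar, smul_eq_diagonal_mul]
  refine ⟨z, Subgroup.mem_center_iff.mpr fun X => (GeneralLinearGroup.scalar_commute _ X).symm,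
    ?_, ?_⟩
  · rw [hz, trace_smul, smul_eq_mul, div_mul_cancel₀ _ htrN]
  · rw [theta, theta, div_eq_div_iff M.det_ne_zero N.det_ne_zero] at hθ
    rw [hz, det_smul, Fintype.card_fin, div_pow, div_mul_eq_mul_div, hθ, mul_div_cancel_left₀]
    exact pow_ne_zero 2 htrN

end theta

theorem conj_of_theta_eq_general (F : Type*) [Field F]
    (g h : PGL2 F) (hθ : thetaPGL g = thetaPGL h)
    (h0 : thetaPGL g ≠ 0) (h4 : thetaPGL g ≠ 4) :
    IsConj g h := by
  obtain ⟨z, hz, htr, hdet⟩ := exists_mem_center_trace_eq_det_eq_of_theta_eq hθ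
    (hθ ▸ h0 : thetaPGL h ≠ 0)
  have hdiscr := discr_ne_zero_of_theta_ne_four h4
  have hconj : IsConj g.out (z * h.out) :=
    GeneralLinearGroup.isConj_of_trace_eq_of_det_eq (notMem_range_scalar_of_discr_ne_zero hdiscr)
      (notMem_range_scalar_of_discr_ne_zero (by rwa [discr_fin_two, htr, hdet, ← discr_fin_two]))
      htr.symm hdet.symm
  simpa only [QuotientGroup.out_eq'] using QuotientGroup.isConj_mk_of_isConj_mul hz hconj

theorem conj_of_theta_eq (F : Type*) [Field F] [Fintype F]
    (hodd : Odd (Fintype.card F)) (hq : 3 < Fintype.card F)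
    (g h : PGL2 F) (hθ : thetaPGL g = thetaPGL h)
    (h0 : thetaPGL g ≠ 0) (h4 : thetaPGL g ≠ 4) :
    IsConj g h :=
  conj_of_theta_eq_general F g h hθ h0 h4
end

section
/- Let q be an odd prime power and g an element of PGL(2,q). If g has order 2 then θ(g) = 0; if g has order 3 then θ(g) = 1; if g has order 4 then θ(g) = 2; if g has order 6 then θ(g) = 3. -/
/-!
Write `t` and `d` for the trace and determinant of a representative `A ∈ GL(2, F)` of `g`.
By Cayley–Hamilton `A² = t A - d` and `A³ = (t² - d) A - t d`, and `g ^ k = 1` exactly when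
`A ^ k` is scalar (lies in the bottom subalgebra `⊥`). If `A` is not scalar, `c A` is scalar
only for `c = 0`; hence order `2` forces `t = 0` and order `3` forces `t² = d`. For order `4`
apply the first fact to `A²`, whose trace is `t² - 2d`; for order `6` apply the second to `A²`:
`(t² - 2d)² = d²`, i.e. `(t² - 3d)(t² - d) = 0`, and `t² = d` would make `A³` scalar.
-/

open Matrix

theorem eq_zero_of_smul_sub_smul_one_mem_bot {K A : Type*} [Field K] [Ring A] [Algebra K A]
    {x : A} (hx : x ∉ (⊥ : Subalgebra K A)) {a b : K}
    (h : a • x - b • (1 : A) ∈ (⊥ : Subalgebra K A)) : a = 0 := by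
  by_contra ha
  refine hx ((Subalgebra.toSubmodule ⊥).smul_mem_iff ha |>.mp ?_)
  simpa using add_mem h (Subalgebra.smul_mem _ (one_mem _) b)

namespace Matrix

section CommRing

variable {R : Type*} [CommRing R] (A : Matrix (Fin 2) (Fin 2) R)

theorem sq_fin_two : A ^ 2 = A.trace • A - A.det • 1 := by
  nontriviality R
  have h := aeval_self_charpoly A
  simp only [charpoly_fin_two, map_add, map_sub, map_mul, map_pow, Polynomial.aeval_X,
    Polynomial.aeval_C, Algebra.algebraMap_eq_smul_one, smul_mul, one_mul] at h
  rw [← sub_eq_zero, ← h]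
  abel

theorem pow_three_fin_two : A ^ 3 = (A.trace ^ 2 - A.det) • A - (A.trace * A.det) • 1 := by
  rw [pow_succ, sq_fin_two, sub_mul, smul_mul, ← sq, sq_fin_two, smul_mul, one_mul]
  module

theorem trace_sq_fin_two : (A ^ 2).trace = A.trace ^ 2 - 2 * A.det := by
  rw [sq_fin_two, trace_sub, trace_smul, trace_smul, trace_one, Fintype.card_fin]
  simp only [smul_eq_mul]
  ring

theorem pow_three_mem_bot_of_trace_sq_eq_det (h : A.trace ^ 2 = A.det) :
    A ^ 3 ∈ (⊥ : Subalgebra R (Matrix (Fin 2) (Fin 2) R)) := by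
  rw [pow_three_fin_two, h, sub_self, zero_smul, zero_sub]
  exact neg_mem (Subalgebra.smul_mem _ (one_mem _) _)

end CommRing

section Field

variable {K : Type*} [Field K] {A : Matrix (Fin 2) (Fin 2) K}

theorem trace_eq_zero_of_sq_mem_bot (hA : A ∉ (⊥ : Subalgebra K _))
    (h : A ^ 2 ∈ (⊥ : Subalgebra K _)) : A.trace = 0 :=
  eq_zero_of_smul_sub_smul_one_mem_bot hA (sq_fin_two A ▸ h)

theorem trace_sq_eq_det_of_pow_three_mem_bot (hA : A ∉ (⊥ : Subalgebra K _))
    (h : A ^ 3 ∈ (⊥ : Subalgebra K _)) : A.trace ^ 2 = A.det :=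
  sub_eq_zero.mp <| eq_zero_of_smul_sub_smul_one_mem_bot hA (pow_three_fin_two A ▸ h)

end Field

end Matrix

theorem pow_mem_bot_iff_dvd_of_orderOf_eq {n R : Type*} [Fintype n] [DecidableEq n]
    [CommRing R] {M : GL n R} {m : ℕ} (hM : orderOf (M : GL n R ⧸ Subgroup.center (GL n R)) = m)
    (k : ℕ) : M.val ^ k ∈ (⊥ : Subalgebra R (Matrix n n R)) ↔ m ∣ k := by
  rw [← hM, orderOf_dvd_iff_pow_eq_one, ← QuotientGroup.mk_pow, QuotientGroup.eq_one_iff,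
    GeneralLinearGroup.mem_center_iff_val_mem_range_scalar, Algebra.mem_bot,
    Units.val_pow_eq_pow_val]
  rfl

section PGL2

variable {F : Type*} [Field F]

theorem theta_mul_of_mem_center (M : GL (Fin 2) F) {z : GL (Fin 2) F}
    (hz : z ∈ Subgroup.center (GL (Fin 2) F)) : theta (M * z) = theta M := by
  rw [GeneralLinearGroup.center_eq_range_scalar] at hz
  obtain ⟨u, rfl⟩ := hz
  rw [theta, theta, Units.val_mul, GeneralLinearGroup.coe_scalar, scalar_apply,
    ← smul_eq_mul_diagonal, trace_smul, det_smul, Fintype.card_fin, smul_eq_mul, mul_pow]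
  exact mul_div_mul_left _ _ (pow_ne_zero 2 u.ne_zero)

theorem thetaPGL_mk (M : GL (Fin 2) F) : thetaPGL (M : PGL2 F) = theta M := by
  obtain ⟨z, hz⟩ := QuotientGroup.mk_out_eq_mul (Subgroup.center (GL (Fin 2) F)) M
  rw [thetaPGL, hz, theta_mul_of_mem_center M z.2]

theorem theta_eq_of_trace_sq_eq (M : GL (Fin 2) F) {c : F}
    (h : M.val.trace ^ 2 = c * M.val.det) : theta M = c :=
  div_eq_of_eq_mul M.det_ne_zero h

theorem theta_eq_zero_of_orderOf_eq_two {M : GL (Fin 2) F} (hM : orderOf (M : PGL2 F) = 2) :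
    theta M = 0 := by
  have key := pow_mem_bot_iff_dvd_of_orderOf_eq hM
  have htr : M.val.trace = 0 :=
    trace_eq_zero_of_sq_mem_bot (by simpa using (key 1).not.mpr (by decide)) ((key 2).mpr dvd_rfl)
  exact theta_eq_of_trace_sq_eq M (by rw [htr]; ring)

theorem theta_eq_one_of_orderOf_eq_three {M : GL (Fin 2) F} (hM : orderOf (M : PGL2 F) = 3) :
    theta M = 1 := by
  have key := pow_mem_bot_iff_dvd_of_orderOf_eq hM
  refine theta_eq_of_trace_sq_eq M ?_
  rw [one_mul]
  exact trace_sq_eq_det_of_pow_three_mem_bot (by simpa using (key 1).not.mpr (by decide))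
    ((key 3).mpr dvd_rfl)

theorem theta_eq_two_of_orderOf_eq_four {M : GL (Fin 2) F} (hM : orderOf (M : PGL2 F) = 4) :
    theta M = 2 := by
  have key := pow_mem_bot_iff_dvd_of_orderOf_eq hM
  have htr : (M.val ^ 2).trace = 0 :=
    trace_eq_zero_of_sq_mem_bot ((key 2).not.mpr (by decide))
      (by rw [← pow_mul]; exact (key 4).mpr dvd_rfl)
  rw [trace_sq_fin_two, sub_eq_zero] at htr
  exact theta_eq_of_trace_sq_eq M htr

theorem theta_eq_three_of_orderOf_eq_six {M : GL (Fin 2) F} (hM : orderOf (M : PGL2 F) = 6) :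
    theta M = 3 := by
  have key := pow_mem_bot_iff_dvd_of_orderOf_eq hM
  have hsq : (M.val ^ 2).trace ^ 2 = (M.val ^ 2).det :=
    trace_sq_eq_det_of_pow_three_mem_bot ((key 2).not.mpr (by decide))
      (by rw [← pow_mul]; exact (key 6).mpr dvd_rfl)
  have hne : M.val.trace ^ 2 ≠ M.val.det := fun h =>
    absurd ((key 3).mp (pow_three_mem_bot_of_trace_sq_eq_det _ h)) (by decide)
  rw [trace_sq_fin_two, det_pow] at hsq
  have hfac : (M.val.trace ^ 2 - 3 * M.val.det) * (M.val.trace ^ 2 - M.val.det) = 0 := by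
    linear_combination hsq
  exact theta_eq_of_trace_sq_eq M <|
    sub_eq_zero.mp ((mul_eq_zero.mp hfac).resolve_right (sub_ne_zero.mpr hne))

end PGL2

theorem theta_of_small_order_general (F : Type*) [Field F] (g : PGL2 F) :
    (orderOf g = 2 → thetaPGL g = 0) ∧
    (orderOf g = 3 → thetaPGL g = 1) ∧
    (orderOf g = 4 → thetaPGL g = 2) ∧
    (orderOf g = 6 → thetaPGL g = 3) := by
  induction g using QuotientGroup.induction_on with
  | H M =>
    rw [thetaPGL_mk]
    exact ⟨theta_eq_zero_of_orderOf_eq_two, theta_eq_one_of_orderOf_eq_three,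
      theta_eq_two_of_orderOf_eq_four, theta_eq_three_of_orderOf_eq_six⟩

theorem theta_of_small_order (F : Type*) [Field F] [Fintype F]
    (hodd : Odd (Fintype.card F)) (hq : 3 < Fintype.card F) (g : PGL2 F) :
    (orderOf g = 2 → thetaPGL g = 0) ∧
    (orderOf g = 3 → thetaPGL g = 1) ∧
    (orderOf g = 4 → thetaPGL g = 2) ∧
    (orderOf g = 6 → thetaPGL g = 3) :=
  theta_of_small_order_general F g
end

section
/- Let q > 3 be an odd prime power and let C be a conjugacy class of elements of PSL(2,q) of order l with l ∉ {1, 2, p, 6}, where p is the characteristic. Then there exist elements x, y ∈ PSL(2,q) with x of order 2, y of order 3, and xy ∈ C. -/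
/-!
Lift `g` to `A ∈ SL(2, q)` of trace `t`. Trace `0` elements square to `-1` and trace `±2` elements
are `±` unipotent, so `l ∉ {1, 2, p}` forces `t ≠ 0, ±2`. For `t ≠ ±2` the conjugacy class of `A`
in `SL(2, q)` is determined by `t`: the binary quadratic form `v ↦ det (v, A v)` has discriminant
`t² - 4 ≠ 0`, hence represents `1`, and in the basis `v, A v` the matrix of `A` is the companion
matrix of `X² - t X + 1`. It therefore suffices to find `X, Y ∈ SL(2, q)` with traces `0` and `1`
and `tr (X Y) = t`; then `X² = -1` and `Y³ = -1`, and finding them amounts to solving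
`u² + w² = t² - 3`.
-/

open Matrix

open scoped MatrixGroups

namespace FiniteField

open Polynomial

variable {F : Type*} [Field F] [Fintype F]

theorem exists_mul_sq_add_mul_sq_eq (hF : ringChar F ≠ 2) {α β : F} (hα : α ≠ 0) (hβ : β ≠ 0)
    (γ : F) : ∃ u w : F, α * u ^ 2 + β * w ^ 2 = γ := by
  have hf : degree (C α * X ^ 2 : F[X]) = 2 := degree_C_mul_X_pow 2 hα
  have hg : degree (C β * X ^ 2 - C γ : F[X]) = 2 := by
    rw [degree_sub_eq_left_of_degree_lt] <;> rw [degree_C_mul_X_pow 2 hβ]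
    · rfl
    · exact degree_C_le.trans_lt (by norm_num)
  obtain ⟨u, w, h⟩ := exists_root_sum_quadratic hf hg (odd_card_of_char_ne_two hF)
  refine ⟨u, w, ?_⟩
  simp only [eval_sub, eval_mul, eval_C, eval_pow, eval_X] at h
  linear_combination h

theorem exists_quadratic_form_eq_of_ne_zero (hF : ringChar F ≠ 2) {a b c : F} (ha : a ≠ 0)
    (hdisc : b ^ 2 - 4 * a * c ≠ 0) (γ : F) : ∃ x y : F, a * x ^ 2 + b * x * y + c * y ^ 2 = γ := by
  have h2 : (2 : F) ≠ 0 := Ring.two_ne_zero hF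
  obtain ⟨u, w, h⟩ :=
    exists_mul_sq_add_mul_sq_eq hF one_ne_zero (neg_ne_zero.mpr hdisc) (4 * a * γ)
  -- completing the square: `4a (a x² + b x y + c y²) = (2 a x + b y)² - (b² - 4 a c) y²`
  refine ⟨(u - b * w) / (2 * a), w, ?_⟩
  field_simp
  linear_combination h

theorem exists_quadratic_form_eq (hF : ringChar F ≠ 2) {a b c : F}
    (hdisc : b ^ 2 - 4 * a * c ≠ 0) (γ : F) : ∃ x y : F, a * x ^ 2 + b * x * y + c * y ^ 2 = γ := by
  by_cases ha : a = 0
  · by_cases hc : c = 0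
    · have hb : b ≠ 0 := by rintro rfl; simp_all
      exact ⟨γ / b, 1, by field_simp; simp [ha, hc]⟩
    · obtain ⟨y, x, h⟩ := exists_quadratic_form_eq_of_ne_zero (b := b) (c := a) hF hc
        (by rwa [mul_right_comm]) γ
      exact ⟨x, y, by linear_combination h⟩
  · exact exists_quadratic_form_eq_of_ne_zero hF ha hdisc γ

end FiniteField

namespace Matrix.SpecialLinearGroup

section CommRing

variable {R : Type*} [CommRing R]

local notation:1024 "↑ₘ" A:1024 => ((A : SL(2, R)) : Matrix (Fin 2) (Fin 2) R)

def companion (t : R) : SL(2, R) := ⟨!![0, -1; 1, t], by simp [det_fin_two_of]⟩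

theorem coe_sq_eq_trace_smul_sub_one (A : SL(2, R)) : ↑ₘA ^ 2 = (↑ₘA).trace • ↑ₘA - 1 := by
  have hdet : ↑ₘA 0 0 * ↑ₘA 1 1 - ↑ₘA 0 1 * ↑ₘA 1 0 = 1 := by
    rw [← det_fin_two]; exact A.det_coe
  ext i j
  fin_cases i <;> fin_cases j <;> simp [sq, mul_apply, trace_fin_two] <;> grind

theorem sq_eq_neg_one_of_trace_eq_zero {A : SL(2, R)} (h : (↑ₘA).trace = 0) : A ^ 2 = -1 := by
  ext1
  rw [coe_pow, coe_sq_eq_trace_smul_sub_one, h, zero_smul, zero_sub, coe_neg, coe_one]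

theorem pow_three_eq_neg_one_of_trace_eq_one {A : SL(2, R)} (h : (↑ₘA).trace = 1) :
    A ^ 3 = -1 := by
  ext1
  rw [coe_pow, pow_succ, coe_sq_eq_trace_smul_sub_one, h, one_smul, sub_mul, ← sq,
    coe_sq_eq_trace_smul_sub_one, h, one_smul, one_mul, sub_sub_cancel_left, coe_neg, coe_one]

theorem pow_char_eq_one_of_trace_eq_two (p : ℕ) [Fact p.Prime] [CharP R p] {A : SL(2, R)}
    (h : (↑ₘA).trace = 2) : A ^ p = 1 := by
  have hN : (↑ₘA - 1) ^ 2 = 0 := by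
    rw [(Commute.one_right _).sub_sq, coe_sq_eq_trace_smul_sub_one, h, mul_one,
      one_pow, two_mul, two_smul]
    abel
  ext1
  rw [coe_pow, ← add_sub_cancel (1 : Matrix (Fin 2) (Fin 2) R) ↑ₘA,
    add_pow_char_of_commute p (Commute.one_left _), one_pow,
    pow_eq_zero_of_le (Fact.out : p.Prime).two_le hN, add_zero, coe_one]

theorem neg_one_mem_center : (-1 : SL(2, R)) ∈ Subgroup.center SL(2, R) :=
  mem_center_iff.mpr ⟨-1, by simp, by ext i j; fin_cases i <;> fin_cases j <;> simp⟩

theorem mk_neg (A : SL(2, R)) : ((-A : SL(2, R)) : PSL(2, R)) = A := by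
  rw [← neg_one_mul, QuotientGroup.mk_mul, (QuotientGroup.eq_one_iff _).mpr neg_one_mem_center,
    one_mul]

theorem mk_sq_eq_one_of_trace_eq_zero {A : SL(2, R)} (h : (↑ₘA).trace = 0) :
    (A : PSL(2, R)) ^ 2 = 1 := by
  rw [← QuotientGroup.mk_pow, sq_eq_neg_one_of_trace_eq_zero h, mk_neg, QuotientGroup.mk_one]

theorem mk_pow_three_eq_one_of_trace_eq_one {A : SL(2, R)} (h : (↑ₘA).trace = 1) :
    (A : PSL(2, R)) ^ 3 = 1 := by
  rw [← QuotientGroup.mk_pow, pow_three_eq_neg_one_of_trace_eq_one h, mk_neg,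
    QuotientGroup.mk_one]

theorem mk_pow_char_eq_one_of_trace_eq_two_or_neg_two (p : ℕ) [Fact p.Prime] [CharP R p]
    {A : SL(2, R)} (h : (↑ₘA).trace = 2 ∨ (↑ₘA).trace = -2) : (A : PSL(2, R)) ^ p = 1 := by
  rcases h with h | h
  · rw [← QuotientGroup.mk_pow, pow_char_eq_one_of_trace_eq_two p h, QuotientGroup.mk_one]
  · have h' : (↑ₘ(-A)).trace = 2 := by rw [coe_neg, trace_neg, h, neg_neg]
    rw [← mk_neg, ← QuotientGroup.mk_pow, pow_char_eq_one_of_trace_eq_two p h',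
      QuotientGroup.mk_one]

end CommRing

section Field

variable {F : Type*} [Field F]

local notation:1024 "↑ₘ" A:1024 => ((A : SL(2, F)) : Matrix (Fin 2) (Fin 2) F)

theorem mk_eq_one_iff (A : SL(2, F)) : (A : PSL(2, F)) = 1 ↔ A = 1 ∨ A = -1 := by
  rw [QuotientGroup.eq_one_iff, mem_center_iff, Fintype.card_fin]
  constructor
  · rintro ⟨r, hr, hA⟩
    rcases sq_eq_one_iff.mp hr with rfl | rfl
    · exact Or.inl (by ext1; rw [← hA]; simp)
    · exact Or.inr (by ext i j; rw [← hA]; fin_cases i <;> fin_cases j <;> simp)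
  · rintro (rfl | rfl)
    · exact ⟨1, one_pow 2, by ext1; simp⟩
    · exact ⟨-1, by norm_num, by ext i j; fin_cases i <;> fin_cases j <;> simp⟩

theorem orderOf_mk_eq_two (hF : ringChar F ≠ 2) {A : SL(2, F)} (h : (↑ₘA).trace = 0) :
    orderOf (A : PSL(2, F)) = 2 := by
  have : Fact (Nat.Prime 2) := ⟨Nat.prime_two⟩
  refine orderOf_eq_prime (mk_sq_eq_one_of_trace_eq_zero h) ?_
  rw [Ne, mk_eq_one_iff]
  rintro (rfl | rfl) <;> simp [Ring.two_ne_zero hF] at h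

theorem orderOf_mk_eq_three {A : SL(2, F)} (h : (↑ₘA).trace = 1) (hA : (A : PSL(2, F)) ≠ 1) :
    orderOf (A : PSL(2, F)) = 3 :=
  have : Fact (Nat.Prime 3) := ⟨Nat.prime_three⟩
  orderOf_eq_prime (mk_pow_three_eq_one_of_trace_eq_one h) hA

theorem mk_ne_one_of_trace_mul_ne_zero {X Y : SL(2, F)} (hX : (↑ₘX).trace = 0)
    (hXY : (↑ₘ(X * Y)).trace ≠ 0) : (Y : PSL(2, F)) ≠ 1 := by
  rw [Ne, mk_eq_one_iff]
  rintro (rfl | rfl) <;> simp [hX] at hXY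

variable [Fintype F]

theorem isConj_companion_trace (hF : ringChar F ≠ 2) (A : SL(2, F)) (h2 : (↑ₘA).trace ≠ 2)
    (h2' : (↑ₘA).trace ≠ -2) : IsConj (companion (↑ₘA).trace) A := by
  obtain ⟨a, b, c, d, hA⟩ : ∃ a b c d, ↑ₘA = !![a, b; c, d] := ⟨_, _, _, _, eta_fin_two _⟩
  have hdet : a * d - b * c = 1 := by rw [← det_fin_two_of, ← hA, A.det_coe]
  have htr : (↑ₘA).trace = a + d := by rw [hA, trace_fin_two_of]
  have hdisc : (d - a) ^ 2 - 4 * c * -b ≠ 0 := by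
    have h : (d - a) ^ 2 - 4 * c * -b = ((↑ₘA).trace - 2) * ((↑ₘA).trace + 2) := by
      rw [htr]; linear_combination -4 * hdet
    rw [h]
    exact mul_ne_zero (sub_ne_zero.mpr h2) (by rwa [Ne, add_eq_zero_iff_eq_neg])
  -- `P` has columns `v` and `A v`, and `det (v, A v)` is a quadratic form in `v` of discriminant
  -- `tr(A)² - 4`
  obtain ⟨x, y, hxy⟩ := FiniteField.exists_quadratic_form_eq hF hdisc 1
  let P : SL(2, F) := ⟨!![x, a * x + b * y; y, c * x + d * y], by
    rw [det_fin_two_of]; linear_combination hxy⟩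
  have hP : P * companion (a + d) = A * P := by
    ext i j
    rw [coe_mul, coe_mul, hA]
    fin_cases i <;> fin_cases j <;> simp [P, companion]
    · linear_combination x * hdet
    · linear_combination y * hdet
  rw [htr]
  exact isConj_iff.mpr ⟨P, by rw [hP, mul_inv_cancel_right]⟩

theorem isConj_of_trace_eq (hF : ringChar F ≠ 2) {A B : SL(2, F)}
    (h : (↑ₘA).trace = (↑ₘB).trace) (h2 : (↑ₘA).trace ≠ 2) (h2' : (↑ₘA).trace ≠ -2) :
    IsConj A B :=
  (isConj_companion_trace hF A h2 h2').symm.trans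
    (h ▸ isConj_companion_trace hF B (h ▸ h2) (h ▸ h2'))

theorem exists_trace_eq_zero_trace_eq_one_trace_mul_eq (hF : ringChar F ≠ 2) (t : F) :
    ∃ X Y : SL(2, F), (↑ₘX).trace = 0 ∧ (↑ₘY).trace = 1 ∧ (↑ₘ(X * Y)).trace = t := by
  have h2 : (2 : F) ≠ 0 := Ring.two_ne_zero hF
  obtain ⟨u, w, huw⟩ :=
    FiniteField.exists_mul_sq_add_mul_sq_eq hF one_ne_zero one_ne_zero (t ^ 2 - 3)
  let X : SL(2, F) := ⟨!![0, 1; -1, 0], by simp [det_fin_two_of]⟩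
  -- `det Y = (1 + t² - u² - w²) / 4`
  let Y : SL(2, F) := ⟨!![(1 + u) / 2, (w - t) / 2; (w + t) / 2, (1 - u) / 2], by
    rw [det_fin_two_of]; field_simp; linear_combination -huw⟩
  refine ⟨X, Y, by simp [X, trace_fin_two_of], ?_, ?_⟩
  · simp only [Y, trace_fin_two_of]
    field_simp
    ring
  · rw [coe_mul]
    simp only [X, Y, mul_fin_two, trace_fin_two_of]
    field_simp
    ring

end Field

end Matrix.SpecialLinearGroup

open Matrix.SpecialLinearGroup in
theorem exists_x_y_with_product_in_class_general (F : Type*) [Field F] [Fintype F]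
    (hodd : Odd (Fintype.card F))
    (hp : (ringChar F).Prime)
    (l : ℕ) (hl : l ∉ ({1, 2, ringChar F, 6} : Set ℕ))
    (g : Matrix.ProjectiveSpecialLinearGroup (Fin 2) F) (hg : orderOf g = l) :
    ∃ x y : Matrix.ProjectiveSpecialLinearGroup (Fin 2) F,
      orderOf x = 2 ∧ orderOf y = 3 ∧ IsConj g (x * y) := by
  have hF : ringChar F ≠ 2 := fun h2 ↦
    Nat.not_even_iff_odd.mpr hodd (Nat.even_iff.mpr (FiniteField.even_card_of_char_two h2))
  have : Fact (ringChar F).Prime := ⟨hp⟩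
  simp only [Set.mem_insert_iff, Set.mem_singleton_iff, not_or] at hl
  obtain ⟨A, rfl⟩ := QuotientGroup.mk_surjective g
  have hpow : ∀ r, r.Prime → l ≠ r → (A : PSL(2, F)) ^ r ≠ 1 := fun r hr hlr h ↦ by
    rcases (Nat.dvd_prime hr).mp (hg ▸ orderOf_dvd_of_pow_eq_one h) with h1 | h1
    exacts [hl.1 h1, hlr h1]
  set t := (A : Matrix (Fin 2) (Fin 2) F).trace
  have ht0 : t ≠ 0 := fun h ↦ hpow 2 Nat.prime_two hl.2.1 (mk_sq_eq_one_of_trace_eq_zero h)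
  have ht2 : t ≠ 2 := fun h ↦
    hpow _ hp hl.2.2.1 (mk_pow_char_eq_one_of_trace_eq_two_or_neg_two _ (.inl h))
  have ht2' : t ≠ -2 := fun h ↦
    hpow _ hp hl.2.2.1 (mk_pow_char_eq_one_of_trace_eq_two_or_neg_two _ (.inr h))
  obtain ⟨X, Y, hX, hY, hXY⟩ := exists_trace_eq_zero_trace_eq_one_trace_mul_eq hF t
  refine ⟨X, Y, orderOf_mk_eq_two hF hX,
    orderOf_mk_eq_three hY (mk_ne_one_of_trace_mul_ne_zero hX (hXY ▸ ht0)), ?_⟩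
  rw [← QuotientGroup.mk_mul]
  exact (QuotientGroup.mk' _).map_isConj (isConj_of_trace_eq hF hXY.symm ht2 ht2')

theorem exists_x_y_with_product_in_class (F : Type*) [Field F] [Fintype F]
    (hodd : Odd (Fintype.card F)) (hq : 3 < Fintype.card F)
    (hp : (ringChar F).Prime)
    (l : ℕ) (hl : l ∉ ({1, 2, ringChar F, 6} : Set ℕ))
    (g : Matrix.ProjectiveSpecialLinearGroup (Fin 2) F) (hg : orderOf g = l) :
    ∃ x y : Matrix.ProjectiveSpecialLinearGroup (Fin 2) F,
      orderOf x = 2 ∧ orderOf y = 3 ∧ IsConj g (x * y) :=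
  exists_x_y_with_product_in_class_general F hodd hp l hl g hg
end

section
/- Let X = [[a,b],[c,−a]] and Y = [[−1,1],[−1,0]] be matrices over a field F with det X = 1 (i.e., −a² − bc = 1). Let T = [[−(b+c), 2a+b],[2a−c, b+c]]. Then tr T = 0, XT = TX⁻¹, YT = TY⁻¹, and det T = 3·det(XY) − (tr(XY))²; in particular T is invertible if and only if (tr(XY))²/det(XY) ≠ 3. -/
/-!
The matrix `T` is the commutator `XY - YX`. For a `2 × 2` matrix `A` of determinant one,
Cayley–Hamilton gives `A⁻¹ = tr A - A` and `A² = tr A · A - 1`, so that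
`A [A, B] + [A, B] A = A² B - B A² = tr A · [A, B]`, i.e. `A [A, B] = [A, B] A⁻¹`;
this applies to both `X` and `Y`. The determinant is an instance of the general identity for
`det [A, B]` in terms of the traces and determinants of `A`, `B`, `AB`.
-/

open Matrix

namespace Matrix

variable {R : Type*} [CommRing R]

theorem mul_self_fin_two (A : Matrix (Fin 2) (Fin 2) R) :
    A * A = trace A • A - det A • (1 : Matrix (Fin 2) (Fin 2) R) := by
  ext i j
  fin_cases i <;> fin_cases j <;>
    simp [mul_apply, trace_fin_two, det_fin_two] <;> ring

theorem inv_fin_two_of_det_eq_one {A : Matrix (Fin 2) (Fin 2) R} (hA : det A = 1) :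
    A⁻¹ = trace A • 1 - A := by
  refine inv_eq_right_inv ?_
  rw [mul_sub, mul_smul_comm, mul_one, mul_self_fin_two, hA, one_smul, sub_sub_cancel]

theorem mul_commutator_add_commutator_mul_fin_two (A B : Matrix (Fin 2) (Fin 2) R) :
    A * (A * B - B * A) + (A * B - B * A) * A = trace A • (A * B - B * A) := by
  calc A * (A * B - B * A) + (A * B - B * A) * A = A * A * B - B * (A * A) := by noncomm_ring
    _ = trace A • (A * B - B * A) := by
      rw [mul_self_fin_two, sub_mul, mul_sub, smul_mul_assoc, mul_smul_comm, smul_mul_assoc,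
        mul_smul_comm, one_mul, mul_one, smul_sub]
      abel

theorem mul_commutator_eq_commutator_mul_inv_fin_two_left {A : Matrix (Fin 2) (Fin 2) R}
    (hA : det A = 1) (B : Matrix (Fin 2) (Fin 2) R) :
    A * (A * B - B * A) = (A * B - B * A) * A⁻¹ := by
  rw [inv_fin_two_of_det_eq_one hA, mul_sub (A * B - B * A), mul_smul_comm, mul_one,
    ← mul_commutator_add_commutator_mul_fin_two, add_sub_cancel_right]

theorem mul_commutator_eq_commutator_mul_inv_fin_two_right {B : Matrix (Fin 2) (Fin 2) R}
    (hB : det B = 1) (A : Matrix (Fin 2) (Fin 2) R) :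
    B * (A * B - B * A) = (A * B - B * A) * B⁻¹ := by
  rw [← neg_sub (B * A), mul_neg, neg_mul, mul_commutator_eq_commutator_mul_inv_fin_two_left hB]

theorem det_commutator_fin_two (A B : Matrix (Fin 2) (Fin 2) R) :
    det (A * B - B * A) = 4 * det A * det B - trace (A * B) ^ 2
      + trace A * trace B * trace (A * B) - trace A ^ 2 * det B - trace B ^ 2 * det A := by
  simp [det_fin_two, trace_fin_two, mul_apply]
  ring

end Matrix

theorem XYT_relations_general (F : Type*) [Field F]
    (a b c : F) (hdet : -a ^ 2 - b * c = 1) :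
    Matrix.trace !![-(b + c), 2 * a + b; 2 * a - c, b + c] = 0 ∧
    !![a, b; c, -a] * !![-(b + c), 2 * a + b; 2 * a - c, b + c] =
      !![-(b + c), 2 * a + b; 2 * a - c, b + c] * (!![a, b; c, -a])⁻¹ ∧
    !![(-1 : F), 1; -1, 0] * !![-(b + c), 2 * a + b; 2 * a - c, b + c] =
      !![-(b + c), 2 * a + b; 2 * a - c, b + c] * (!![(-1 : F), 1; -1, 0])⁻¹ ∧
    (!![-(b + c), 2 * a + b; 2 * a - c, b + c]).det =
      3 * (!![a, b; c, -a] * !![(-1 : F), 1; -1, 0]).det -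
        (Matrix.trace (!![a, b; c, -a] * !![(-1 : F), 1; -1, 0])) ^ 2 ∧
    (IsUnit !![-(b + c), 2 * a + b; 2 * a - c, b + c] ↔
      (Matrix.trace (!![a, b; c, -a] * !![(-1 : F), 1; -1, 0])) ^ 2 /
          (!![a, b; c, -a] * !![(-1 : F), 1; -1, 0]).det ≠ 3) := by
  set X := !![a, b; c, -a]
  set Y := !![(-1 : F), 1; -1, 0]
  have hT : !![-(b + c), 2 * a + b; 2 * a - c, b + c] = X * Y - Y * X := by
    ext i j
    fin_cases i <;> fin_cases j <;> simp [X, Y] <;> ring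
  have hX : det X = 1 := by rw [det_fin_two_of]; linear_combination hdet
  have hY : det Y = 1 := by simp [Y, det_fin_two_of]
  have hXY : det (X * Y) = 1 := by rw [det_mul, hX, hY, one_mul]
  have hdetT : det (X * Y - Y * X) = 3 - trace (X * Y) ^ 2 := by
    rw [det_commutator_fin_two, hX, hY, trace_fin_two_of, trace_fin_two_of]
    ring
  rw [hT, hdetT, hXY, div_one, mul_one]
  refine ⟨by rw [trace_sub, trace_mul_comm, sub_self],
    mul_commutator_eq_commutator_mul_inv_fin_two_left hX Y,
    mul_commutator_eq_commutator_mul_inv_fin_two_right hY X, rfl, ?_⟩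
  rw [isUnit_iff_isUnit_det, isUnit_iff_ne_zero, hdetT, sub_ne_zero, ne_comm]

theorem XYT_relations (F : Type*) [Field F] (hchar : (2 : F) ≠ 0)
    (a b c : F) (hdet : -a ^ 2 - b * c = 1) :
    Matrix.trace !![-(b + c), 2 * a + b; 2 * a - c, b + c] = 0 ∧
    !![a, b; c, -a] * !![-(b + c), 2 * a + b; 2 * a - c, b + c] =
      !![-(b + c), 2 * a + b; 2 * a - c, b + c] * (!![a, b; c, -a])⁻¹ ∧
    !![(-1 : F), 1; -1, 0] * !![-(b + c), 2 * a + b; 2 * a - c, b + c] =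
      !![-(b + c), 2 * a + b; 2 * a - c, b + c] * (!![(-1 : F), 1; -1, 0])⁻¹ ∧
    (!![-(b + c), 2 * a + b; 2 * a - c, b + c]).det =
      3 * (!![a, b; c, -a] * !![(-1 : F), 1; -1, 0]).det -
        (Matrix.trace (!![a, b; c, -a] * !![(-1 : F), 1; -1, 0])) ^ 2 ∧
    (IsUnit !![-(b + c), 2 * a + b; 2 * a - c, b + c] ↔
      (Matrix.trace (!![a, b; c, -a] * !![(-1 : F), 1; -1, 0])) ^ 2 /
          (!![a, b; c, -a] * !![(-1 : F), 1; -1, 0]).det ≠ 3) :=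
  XYT_relations_general F a b c hdet
end
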